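/- Let X, Y be metrizable spaces with Y separable. (a) For every 1 ≤ ξ < ω₁, if f : X → Y is the pointwise limit of a sequence of Δ⁰_ξ-functions, then f is of Baire class ξ. (b) Conversely, for every 1 < ξ < ω₁, if f : X → Y is of Baire class ξ, then f is the pointwise limit of a sequence of Δ⁰_ξ-functions. -/

import Mathlib

/-!
A pointwise limit of `Σ⁰_γ`-measurable maps is `Σ⁰_{γ+1}`-measurable, so (a) follows from the
Lebesgue–Hausdorff–Banach theorem: a `Σ⁰_{ξ+1}`-measurable map into a separable metrizable space
is of Baire class `ξ`. This is proved by induction on `ξ`. Such a map is a uniform limit of maps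
`h n` that are constant on the pieces of a countable cover by `Π⁰_ν` sets, `ν ≤ ξ`. Writing each
piece as a decreasing intersection of sets of level `κ + 1` with `κ < ξ` makes `h n` an
eventually constant limit of maps of lower level, and a diagonal sequence, clamped so that
consecutive terms stay geometrically close, merges these limits into a single one.

For (b), the terms of a sequence witnessing Baire class `ξ` are `Σ⁰_ξ`-measurable, and a
`Σ⁰_ξ`-measurable map is uniformly approximated by maps that are constant on the pieces of a
countable `Σ⁰_ξ` partition; such maps are `Δ⁰_ξ`-functions.
-/

open Set Filter Topology TopologicalSpace Ordinal

/-- The Borel pointclasses `Σ⁰_ξ` of a metrizable space, for ordinals `ξ ≥ 1`: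
`Σ⁰₁` is the collection of open sets and, for `ξ > 1`, `Σ⁰_ξ` consists of the
countable unions of sets each of which belongs to `Π⁰_ν` (i.e. has its
complement in `Σ⁰_ν`) for some `1 ≤ ν < ξ`. -/
noncomputable def SigmaZero (X : Type*) [TopologicalSpace X] : Ordinal.{0} → Set (Set X) :=
  WellFounded.fix wellFounded_lt fun ξ ih =>
    if ξ = 1 then {s | IsOpen s}
    else {s | ∃ f : ℕ → Set X,
      (∀ n, ∃ ν, ∃ hν : ν < ξ, 1 ≤ ν ∧ (f n)ᶜ ∈ ih ν hν) ∧ s = ⋃ n, f n}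

/-- `Π⁰_ξ`: the complements of `Σ⁰_ξ` sets (with the convention that `Π⁰₀` is
the collection of clopen sets). -/
def PiZero (X : Type*) [TopologicalSpace X] (ξ : Ordinal.{0}) : Set (Set X) :=
  if ξ = 0 then {s | IsClopen s} else {s | sᶜ ∈ SigmaZero X ξ}

/-- `Δ⁰_ξ = Σ⁰_ξ ∩ Π⁰_ξ`. -/
def DeltaZero (X : Type*) [TopologicalSpace X] (ξ : Ordinal.{0}) : Set (Set X) :=
  SigmaZero X ξ ∩ PiZero X ξ

/-- `f` is a `Δ⁰_ξ`-function if preimages of `Σ⁰_ξ` sets are `Σ⁰_ξ`. -/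
def IsDeltaFun {X Y : Type*} [TopologicalSpace X] [TopologicalSpace Y]
    (ξ : Ordinal.{0}) (f : X → Y) : Prop :=
  ∀ A ∈ SigmaZero Y ξ, f ⁻¹' A ∈ SigmaZero X ξ

/-- Baire class `ξ` functions (for `ξ ≥ 1`): `f` is of Baire class `1` if
preimages of open sets are `Σ⁰₂`, and for `ξ > 1` it is of Baire class `ξ` if it
is the pointwise limit of a sequence of functions each of Baire class `ν` for
some `1 ≤ ν < ξ`. -/
noncomputable def BaireClass {X Y : Type*} [TopologicalSpace X] [TopologicalSpace Y] :
    Ordinal.{0} → (X → Y) → Prop :=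
  WellFounded.fix wellFounded_lt fun ξ ih f =>
    if ξ = 1 then ∀ U : Set Y, IsOpen U → f ⁻¹' U ∈ SigmaZero X 2
    else ∃ g : ℕ → X → Y,
      (∀ n, ∃ ν, ∃ hν : ν < ξ, 1 ≤ ν ∧ ih ν hν (g n)) ∧
      ∀ x, Tendsto (fun n => g n x) atTop (𝓝 (f x))

section Unfold

variable {X Y : Type*} [TopologicalSpace X] [TopologicalSpace Y]

theorem sigmaZero_eq (ξ : Ordinal.{0}) :
    SigmaZero X ξ = if ξ = 1 then {s | IsOpen s}
      else {s | ∃ f : ℕ → Set X,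
        (∀ n, ∃ ν, ∃ _ : ν < ξ, 1 ≤ ν ∧ (f n)ᶜ ∈ SigmaZero X ν) ∧ s = ⋃ n, f n} :=
  WellFounded.fix_eq _ _ _

theorem sigmaZero_one : SigmaZero X 1 = {s | IsOpen s} := by
  rw [sigmaZero_eq, if_pos rfl]

theorem mem_sigmaZero_iff {ξ : Ordinal.{0}} (hξ : ξ ≠ 1) {s : Set X} :
    s ∈ SigmaZero X ξ ↔ ∃ f : ℕ → Set X,
      (∀ n, ∃ ν, ∃ _ : ν < ξ, 1 ≤ ν ∧ (f n)ᶜ ∈ SigmaZero X ν) ∧ s = ⋃ n, f n := by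
  rw [sigmaZero_eq, if_neg hξ, mem_ofPred_eq]

theorem baireClass_eq (ξ : Ordinal.{0}) (f : X → Y) :
    BaireClass ξ f = if ξ = 1 then ∀ U : Set Y, IsOpen U → f ⁻¹' U ∈ SigmaZero X 2
      else ∃ g : ℕ → X → Y,
        (∀ n, ∃ ν, ∃ _ : ν < ξ, 1 ≤ ν ∧ BaireClass ν (g n)) ∧
        ∀ x, Tendsto (fun n => g n x) atTop (𝓝 (f x)) :=
  congrFun (WellFounded.fix_eq (C := fun _ => (X → Y) → Prop) _ _ ξ) f

theorem baireClass_one {f : X → Y} :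
    BaireClass 1 f ↔ ∀ U : Set Y, IsOpen U → f ⁻¹' U ∈ SigmaZero X 2 := by
  rw [baireClass_eq, if_pos rfl]

theorem baireClass_iff {ξ : Ordinal.{0}} (hξ : ξ ≠ 1) {f : X → Y} :
    BaireClass ξ f ↔ ∃ g : ℕ → X → Y,
      (∀ n, ∃ ν, ∃ _ : ν < ξ, 1 ≤ ν ∧ BaireClass ν (g n)) ∧
      ∀ x, Tendsto (fun n => g n x) atTop (𝓝 (f x)) := by
  rw [baireClass_eq, if_neg hξ]

end Unfold

section Hierarchy

variable {X : Type*} [TopologicalSpace X] {ξ : Ordinal.{0}}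

theorem mem_sigmaZero_of_compl_mem {ν : Ordinal.{0}} (hν : 1 ≤ ν) (hνξ : ν < ξ) {s : Set X}
    (hs : sᶜ ∈ SigmaZero X ν) : s ∈ SigmaZero X ξ :=
  (mem_sigmaZero_iff (hν.trans_lt hνξ).ne').2
    ⟨fun _ => s, fun _ => ⟨ν, hνξ, hν, hs⟩, (iUnion_const s).symm⟩

theorem empty_mem_sigmaZero (hξ : 1 ≤ ξ) : (∅ : Set X) ∈ SigmaZero X ξ := by
  rcases hξ.eq_or_lt with rfl | hξ
  · simp [sigmaZero_one]
  · exact mem_sigmaZero_of_compl_mem le_rfl hξ (by simp [sigmaZero_one])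

theorem univ_mem_sigmaZero (hξ : 1 ≤ ξ) : (univ : Set X) ∈ SigmaZero X ξ := by
  rcases hξ.eq_or_lt with rfl | hξ
  · simp [sigmaZero_one]
  · exact mem_sigmaZero_of_compl_mem le_rfl hξ (by simp [sigmaZero_one])

theorem iUnion_mem_sigmaZero {ι : Sort*} [Countable ι] (hξ : 1 ≤ ξ) {s : ι → Set X}
    (hs : ∀ i, s i ∈ SigmaZero X ξ) : ⋃ i, s i ∈ SigmaZero X ξ := by
  rcases isEmpty_or_nonempty ι with hι | hι
  · simpa using empty_mem_sigmaZero hξ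
  rcases hξ.eq_or_lt with rfl | hξ
  · simp only [sigmaZero_one, mem_ofPred_eq] at hs ⊢
    exact isOpen_iUnion hs
  choose F hF hsF using fun i => (mem_sigmaZero_iff hξ.ne').1 (hs i)
  obtain ⟨e, he⟩ := exists_surjective_nat (ι ×' ℕ)
  refine (mem_sigmaZero_iff hξ.ne').2 ⟨fun k => F (e k).1 (e k).2, fun k => hF _ _, ?_⟩
  rw [he.iUnion_comp (fun p => F p.1 p.2)]
  ext x
  simp [hsF]

theorem iUnion_mem_sigmaZero_add_one {ι : Sort*} [Countable ι] {γ : Ordinal.{0}} (hγ : 1 ≤ γ)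
    {s : ι → Set X} (hs : ∀ i, (s i)ᶜ ∈ SigmaZero X γ) : ⋃ i, s i ∈ SigmaZero X (γ + 1) :=
  iUnion_mem_sigmaZero (hγ.trans (lt_add_one γ).le) fun i =>
    mem_sigmaZero_of_compl_mem hγ (lt_add_one γ) (hs i)

theorem union_mem_sigmaZero (hξ : 1 ≤ ξ) {s t : Set X} (hs : s ∈ SigmaZero X ξ)
    (ht : t ∈ SigmaZero X ξ) : s ∪ t ∈ SigmaZero X ξ := by
  rw [union_eq_iUnion]
  exact iUnion_mem_sigmaZero hξ fun b => by cases b <;> assumption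

theorem IsOpen.mem_sigmaZero [MetrizableSpace X] (hξ : 1 ≤ ξ) {s : Set X} (hs : IsOpen s) :
    s ∈ SigmaZero X ξ := by
  rcases hξ.eq_or_lt with rfl | hξ
  · rwa [sigmaZero_one]
  let := metrizableSpaceMetric X
  obtain ⟨F, hF, -, rfl, -⟩ := hs.exists_iUnion_isClosed
  exact (mem_sigmaZero_iff hξ.ne').2
    ⟨F, fun n => ⟨1, hξ, le_rfl, by simpa [sigmaZero_one] using (hF n).isOpen_compl⟩, rfl⟩

theorem sigmaZero_mono [MetrizableSpace X] {α β : Ordinal.{0}} (hα : 1 ≤ α) (hαβ : α ≤ β) :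
    SigmaZero X α ⊆ SigmaZero X β := by
  intro s hs
  rcases hαβ.eq_or_lt with rfl | hαβ
  · exact hs
  rcases hα.eq_or_lt with rfl | hα
  · exact IsOpen.mem_sigmaZero hαβ.le (by simpa [sigmaZero_one] using hs)
  obtain ⟨F, hF, rfl⟩ := (mem_sigmaZero_iff hα.ne').1 hs
  refine (mem_sigmaZero_iff (hα.trans hαβ).ne').2 ⟨F, fun n => ?_, rfl⟩
  obtain ⟨ν, hν, h1, hc⟩ := hF n
  exact ⟨ν, hν.trans hαβ, h1, hc⟩

theorem inter_mem_sigmaZero [MetrizableSpace X] (hξ : 1 ≤ ξ) {s t : Set X}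
    (hs : s ∈ SigmaZero X ξ) (ht : t ∈ SigmaZero X ξ) : s ∩ t ∈ SigmaZero X ξ := by
  rcases hξ.eq_or_lt with rfl | hξ
  · simp only [sigmaZero_one, mem_ofPred_eq] at hs ht ⊢
    exact hs.inter ht
  obtain ⟨A, hA, rfl⟩ := (mem_sigmaZero_iff hξ.ne').1 hs
  obtain ⟨B, hB, rfl⟩ := (mem_sigmaZero_iff hξ.ne').1 ht
  rw [iUnion_inter_iUnion]
  refine iUnion_mem_sigmaZero hξ.le fun i => iUnion_mem_sigmaZero hξ.le fun j => ?_
  obtain ⟨ν₁, hν₁, h1₁, hc₁⟩ := hA i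
  obtain ⟨ν₂, hν₂, h1₂, hc₂⟩ := hB j
  refine mem_sigmaZero_of_compl_mem (le_max_of_le_left h1₁) (max_lt hν₁ hν₂) ?_
  rw [compl_inter]
  exact union_mem_sigmaZero (le_max_of_le_left h1₁)
    (sigmaZero_mono h1₁ (le_max_left _ _) hc₁) (sigmaZero_mono h1₂ (le_max_right _ _) hc₂)

theorem biInter_finset_mem_sigmaZero [MetrizableSpace X] {ι : Type*} (hξ : 1 ≤ ξ)
    (t : Finset ι) {s : ι → Set X} (hs : ∀ i ∈ t, s i ∈ SigmaZero X ξ) :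
    ⋂ i ∈ t, s i ∈ SigmaZero X ξ := by
  classical
  induction t using Finset.induction_on with
  | empty => simpa using univ_mem_sigmaZero hξ
  | insert i t _ ih =>
    rw [Finset.set_biInter_insert]
    exact inter_mem_sigmaZero hξ (hs i (t.mem_insert_self i))
      (ih fun j hj => hs j (Finset.mem_insert_of_mem hj))

theorem mem_deltaZero_iff (hξ : ξ ≠ 0) {s : Set X} :
    s ∈ DeltaZero X ξ ↔ s ∈ SigmaZero X ξ ∧ sᶜ ∈ SigmaZero X ξ := by
  simp [DeltaZero, PiZero, hξ]

theorem deltaZero_mono [MetrizableSpace X] {α β : Ordinal.{0}} (hα : 1 ≤ α) (hαβ : α ≤ β) :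
    DeltaZero X α ⊆ DeltaZero X β := by
  have hα₀ : α ≠ 0 := (zero_lt_one.trans_le hα).ne'
  have hβ₀ : β ≠ 0 := (zero_lt_one.trans_le (hα.trans hαβ)).ne'
  intro s hs
  rw [mem_deltaZero_iff hα₀] at hs
  rw [mem_deltaZero_iff hβ₀]
  exact ⟨sigmaZero_mono hα hαβ hs.1, sigmaZero_mono hα hαβ hs.2⟩

theorem univ_mem_deltaZero (hξ : 1 ≤ ξ) : (univ : Set X) ∈ DeltaZero X ξ := by
  rw [mem_deltaZero_iff (zero_lt_one.trans_le hξ).ne', compl_univ]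
  exact ⟨univ_mem_sigmaZero hξ, empty_mem_sigmaZero hξ⟩

theorem mem_deltaZero_of_compl_mem [MetrizableSpace X]
    {ν : Ordinal.{0}} (hν : 1 ≤ ν) (hνξ : ν < ξ) {s : Set X} (hs : sᶜ ∈ SigmaZero X ν) :
    s ∈ DeltaZero X ξ :=
  (mem_deltaZero_iff (zero_lt_one.trans_le (hν.trans hνξ.le)).ne').2
    ⟨mem_sigmaZero_of_compl_mem hν hνξ hs, sigmaZero_mono hν hνξ.le hs⟩

end Hierarchy

section Measurable

variable {X Y : Type*} [TopologicalSpace X] [TopologicalSpace Y]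

def SigmaZeroMeasurable (ξ : Ordinal.{0}) (f : X → Y) : Prop :=
  ∀ U : Set Y, IsOpen U → f ⁻¹' U ∈ SigmaZero X ξ

theorem SigmaZeroMeasurable.mono [MetrizableSpace X] {α β : Ordinal.{0}} {f : X → Y}
    (hf : SigmaZeroMeasurable α f) (hα : 1 ≤ α) (hαβ : α ≤ β) : SigmaZeroMeasurable β f :=
  fun U hU => sigmaZero_mono hα hαβ (hf U hU)

theorem sigmaZeroMeasurable_of_isEmpty [IsEmpty X] {ξ : Ordinal.{0}} (hξ : 1 ≤ ξ) (f : X → Y) :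
    SigmaZeroMeasurable ξ f := fun U _ => by
  simpa only [eq_empty_of_isEmpty (f ⁻¹' U)] using empty_mem_sigmaZero hξ

theorem IsDeltaFun.sigmaZeroMeasurable [MetrizableSpace Y] {ξ : Ordinal.{0}} (hξ : 1 ≤ ξ)
    {f : X → Y} (hf : IsDeltaFun ξ f) : SigmaZeroMeasurable ξ f :=
  fun U hU => hf U (hU.mem_sigmaZero hξ)

theorem IsOpen.exists_isClosed_nhds_cover [MetrizableSpace Y] {U : Set Y} (hU : IsOpen U) :
    ∃ C : ℕ → Set Y, (∀ m, IsClosed (C m)) ∧ (∀ m, C m ⊆ U) ∧ ∀ y ∈ U, ∃ m, C m ∈ 𝓝 y := by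
  let := metrizableSpaceMetric Y
  obtain ⟨F, hF, hFU, hUF, -⟩ := hU.exists_iUnion_isClosed
  choose V hV hFV hVU using fun m => normal_exists_closure_subset (hF m) hU (hFU m)
  refine ⟨fun m => closure (V m), fun m => isClosed_closure, hVU, fun y hy => ?_⟩
  rw [← hUF, mem_iUnion] at hy
  obtain ⟨m, hm⟩ := hy
  exact ⟨m, mem_of_superset ((hV m).mem_nhds (hFV m hm)) subset_closure⟩

theorem sigmaZeroMeasurable_of_tendsto [MetrizableSpace Y] {γ : Ordinal.{0}} (hγ : 1 ≤ γ)
    {g : ℕ → X → Y} {f : X → Y} (hg : ∀ n, SigmaZeroMeasurable γ (g n))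
    (hlim : ∀ x, Tendsto (fun n => g n x) atTop (𝓝 (f x))) :
    SigmaZeroMeasurable (γ + 1) f := by
  intro U hU
  obtain ⟨C, hC, hCU, hUC⟩ := hU.exists_isClosed_nhds_cover
  have hpre : f ⁻¹' U = ⋃ p : ℕ × ℕ, ⋂ n, g (p.2 + n) ⁻¹' C p.1 := by
    ext x
    simp only [mem_preimage, mem_iUnion, mem_iInter, Prod.exists]
    constructor
    · intro hx
      obtain ⟨m, hm⟩ := hUC _ hx
      obtain ⟨N, hN⟩ := eventually_atTop.1 (hlim x hm)
      exact ⟨m, N, fun n => hN _ (Nat.le_add_right N n)⟩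
    · rintro ⟨m, N, hN⟩
      refine hCU m ((hC m).mem_of_tendsto (hlim x) (eventually_atTop.2 ⟨N, fun n hn => ?_⟩))
      simpa [Nat.add_sub_cancel' hn] using hN (n - N)
  rw [hpre]
  refine iUnion_mem_sigmaZero_add_one hγ fun p => ?_
  rw [compl_iInter]
  exact iUnion_mem_sigmaZero hγ fun n => hg _ _ (hC p.1).isOpen_compl

theorem BaireClass.sigmaZeroMeasurable [MetrizableSpace X] [MetrizableSpace Y]
    {ξ : Ordinal.{0}} (hξ : 1 ≤ ξ) {f : X → Y} (hf : BaireClass ξ f) :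
    SigmaZeroMeasurable (ξ + 1) f := by
  induction ξ using WellFoundedLT.induction generalizing f with
  | ind ξ IH =>
  rcases hξ.eq_or_lt with rfl | hξ
  · rw [one_add_one_eq_two]
    exact baireClass_one.1 hf
  obtain ⟨g, hg, hlim⟩ := (baireClass_iff hξ.ne').1 hf
  refine sigmaZeroMeasurable_of_tendsto hξ.le (fun n => ?_) hlim
  obtain ⟨ν, hν, h1, hgn⟩ := hg n
  exact (IH ν hν h1 hgn).mono (h1.trans (lt_add_one ν).le) (Order.add_one_le_iff.2 hν)

end Measurable

section PiecewiseConst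

variable {X Y : Type*} [TopologicalSpace X] {ξ : Ordinal.{0}}

def IsSigmaZeroPiecewiseConst (ξ : Ordinal.{0}) (g : X → Y) : Prop :=
  ∃ (φ : X → ℕ) (c : ℕ → Y), (∀ k, φ ⁻¹' {k} ∈ SigmaZero X ξ) ∧ g = c ∘ φ

namespace IsSigmaZeroPiecewiseConst

variable {g : X → Y}

theorem preimage_mem (hg : IsSigmaZeroPiecewiseConst ξ g) (hξ : 1 ≤ ξ) (A : Set Y) :
    g ⁻¹' A ∈ SigmaZero X ξ := by
  obtain ⟨φ, c, hφ, rfl⟩ := hg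
  rw [preimage_comp, ← biUnion_preimage_singleton]
  exact iUnion_mem_sigmaZero hξ fun k => iUnion_mem_sigmaZero hξ fun _ => hφ k

theorem isDeltaFun [TopologicalSpace Y] (hg : IsSigmaZeroPiecewiseConst ξ g) (hξ : 1 ≤ ξ) :
    IsDeltaFun ξ g :=
  fun A _ => hg.preimage_mem hξ A

theorem sigmaZeroMeasurable [TopologicalSpace Y] (hg : IsSigmaZeroPiecewiseConst ξ g)
    (hξ : 1 ≤ ξ) : SigmaZeroMeasurable ξ g :=
  fun U _ => hg.preimage_mem hξ U

theorem mono [MetrizableSpace X] {β : Ordinal.{0}} (hg : IsSigmaZeroPiecewiseConst ξ g)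
    (hξ : 1 ≤ ξ) (hξβ : ξ ≤ β) : IsSigmaZeroPiecewiseConst β g := by
  obtain ⟨φ, c, hφ, rfl⟩ := hg
  exact ⟨φ, c, fun k => sigmaZero_mono hξ hξβ (hφ k), rfl⟩

theorem comp₂ [MetrizableSpace X] {Z W : Type*} {g₁ : X → Y} {g₂ : X → Z}
    (h₁ : IsSigmaZeroPiecewiseConst ξ g₁) (h₂ : IsSigmaZeroPiecewiseConst ξ g₂) (hξ : 1 ≤ ξ)
    (F : Y → Z → W) : IsSigmaZeroPiecewiseConst ξ fun x => F (g₁ x) (g₂ x) := by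
  obtain ⟨φ₁, c₁, hφ₁, rfl⟩ := h₁
  obtain ⟨φ₂, c₂, hφ₂, rfl⟩ := h₂
  refine ⟨fun x => Nat.pair (φ₁ x) (φ₂ x), fun k => F (c₁ k.unpair.1) (c₂ k.unpair.2),
    fun k => ?_, by ext x; simp⟩
  have hfib : (fun x => Nat.pair (φ₁ x) (φ₂ x)) ⁻¹' {k} =
      φ₁ ⁻¹' {k.unpair.1} ∩ φ₂ ⁻¹' {k.unpair.2} := by
    ext x
    conv_lhs => rw [mem_preimage, mem_singleton_iff, ← Nat.pair_unpair k, Nat.pair_eq_pair]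
    rfl
  rw [hfib]
  exact inter_mem_sigmaZero hξ (hφ₁ _) (hφ₂ _)

end IsSigmaZeroPiecewiseConst

theorem exists_firstIndex [MetrizableSpace X] (hξ : 1 ≤ ξ) {A : ℕ → Set X}
    (hA : ∀ l, A l ∈ DeltaZero X ξ) (hcov : ∀ x, ∃ l, x ∈ A l) :
    ∃ φ : X → ℕ, (∀ k, φ ⁻¹' {k} ∈ SigmaZero X ξ) ∧
      ∀ x k, φ x = k ↔ x ∈ A k ∧ ∀ i < k, x ∉ A i := by
  classical
  have hξ₀ : ξ ≠ 0 := (zero_lt_one.trans_le hξ).ne'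
  refine ⟨fun x => Nat.find (hcov x), fun k => ?_, fun x k => Nat.find_eq_iff (hcov x)⟩
  have hfib : (fun x => Nat.find (hcov x)) ⁻¹' {k} = A k ∩ ⋂ i ∈ Finset.range k, (A i)ᶜ := by
    ext x
    simp [Nat.find_eq_iff]
  rw [hfib]
  exact inter_mem_sigmaZero hξ ((mem_deltaZero_iff hξ₀).1 (hA k)).1
    (biInter_finset_mem_sigmaZero hξ _ fun i _ => ((mem_deltaZero_iff hξ₀).1 (hA i)).2)

end PiecewiseConst

theorem exists_lt_forall_le_of_forall_lt {α : Type*} [LinearOrder α] [OrderBot α] {ξ : α}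
    {κ : ℕ → α} (hκ : ∀ i, κ i < ξ) (n : ℕ) : ∃ γ < ξ, ∀ i ≤ n, κ i ≤ γ :=
  ⟨(Finset.range (n + 1)).sup κ,
    (Finset.sup_lt_iff (bot_le.trans_lt (hκ 0))).2 fun i _ => hκ i,
    fun _ hi => Finset.le_sup (Finset.mem_range.2 (Nat.lt_succ_of_le hi))⟩

section Cover

variable {X Y : Type*} [TopologicalSpace X] [PseudoMetricSpace Y] [SeparableSpace Y] [Nonempty Y]
  {ξ : Ordinal.{0}} {f : X → Y}

theorem SigmaZeroMeasurable.exists_cover_dist_lt (hξ : ξ ≠ 1) (hf : SigmaZeroMeasurable ξ f)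
    {ε : ℝ} (hε : 0 < ε) :
    ∃ (Q : ℕ → Set X) (c : ℕ → Y), (∀ x, ∃ l, x ∈ Q l) ∧
      (∀ l, ∃ ν < ξ, 1 ≤ ν ∧ (Q l)ᶜ ∈ SigmaZero X ν) ∧
      ∀ l, ∀ x ∈ Q l, dist (f x) (c l) < ε := by
  let y := denseSeq Y
  choose P hP hfP using fun i => (mem_sigmaZero_iff hξ).1 (hf _ (Metric.isOpen_ball (x := y i)))
  refine ⟨fun l => P l.unpair.1 l.unpair.2, fun l => y l.unpair.1, fun x => ?_,
    fun l => ?_, fun l x hx => ?_⟩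
  · obtain ⟨i, hi⟩ := Metric.denseRange_iff.1 (denseRange_denseSeq Y) (f x) ε hε
    have hx : x ∈ f ⁻¹' Metric.ball (y i) ε := by simpa [dist_comm] using hi
    rw [hfP i, mem_iUnion] at hx
    obtain ⟨m, hm⟩ := hx
    exact ⟨Nat.pair i m, by simpa using hm⟩
  · obtain ⟨ν, hν, hν₁, hPν⟩ := hP l.unpair.1 l.unpair.2
    exact ⟨ν, hν, hν₁, hPν⟩
  · show x ∈ f ⁻¹' Metric.ball (y l.unpair.1) ε
    rw [hfP]
    exact mem_iUnion.2 ⟨_, hx⟩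

end Cover

section Approximation

variable {X Y : Type*} [TopologicalSpace X] [MetrizableSpace X] {ξ : Ordinal.{0}}

theorem exists_antitone_iInter_eq_of_compl_mem_sigmaZero (hξ : 1 < ξ) {ν : Ordinal.{0}}
    (hν : 1 ≤ ν) (hνξ : ν ≤ ξ) {Q : Set X} (hQ : Qᶜ ∈ SigmaZero X ν) :
    ∃ S : ℕ → Set X, Antitone S ∧ ⋂ j, S j = Q ∧
      ∀ j, ∃ κ < ξ, 1 ≤ κ ∧ S j ∈ DeltaZero X (κ + 1) := by
  rcases hνξ.lt_or_eq with hνξ | rfl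
  · refine ⟨fun _ => Q, antitone_const, iInter_const Q, fun _ => ⟨ν, hνξ, hν, ?_⟩⟩
    exact mem_deltaZero_of_compl_mem hν (lt_add_one ν) hQ
  obtain ⟨R, hR, hQR⟩ := (mem_sigmaZero_iff hξ.ne').1 hQ
  choose κ hκ hκ₁ hRκ using hR
  refine ⟨fun j => ⋂ m ∈ Finset.Iic j, (R m)ᶜ, fun i j hij => ?_, ?_, fun j => ?_⟩
  · exact biInter_subset_biInter_left (by simpa using hij)
  · rw [← compl_compl Q, hQR, compl_iUnion]
    ext x
    simp only [mem_iInter, Finset.mem_Iic]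
    exact ⟨fun h m => h m m le_rfl, fun h _ m _ => h m⟩
  obtain ⟨γ, hγ, hκγ⟩ := exists_lt_forall_le_of_forall_lt hκ j
  have hγ₁ : 1 ≤ γ := (hκ₁ 0).trans (hκγ 0 j.zero_le)
  have hγ₁' : 1 ≤ γ + 1 := hγ₁.trans (lt_add_one γ).le
  refine ⟨γ, hγ, hγ₁, (mem_deltaZero_iff (lt_add_one γ).ne_bot).2 ⟨?_, ?_⟩⟩
  · refine biInter_finset_mem_sigmaZero hγ₁' _ fun m hm => ?_
    exact sigmaZero_mono (hκ₁ m) ((hκγ m (Finset.mem_Iic.1 hm)).trans (lt_add_one γ).le) (hRκ m)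
  rw [compl_iInter₂]
  refine iUnion_mem_sigmaZero hγ₁' fun m => iUnion_mem_sigmaZero hγ₁' fun hm => ?_
  rw [compl_compl]
  exact mem_sigmaZero_of_compl_mem (hκ₁ m)
    ((hκγ m (Finset.mem_Iic.1 hm)).trans_lt (lt_add_one γ)) (hRκ m)

variable [PseudoMetricSpace Y] [SeparableSpace Y] [Nonempty Y] {f : X → Y}

theorem SigmaZeroMeasurable.exists_piecewiseConst_dist_lt (hξ : 1 < ξ)
    (hf : SigmaZeroMeasurable ξ f) {ε : ℝ} (hε : 0 < ε) :
    ∃ h : X → Y, IsSigmaZeroPiecewiseConst ξ h ∧ ∀ x, dist (h x) (f x) < ε := by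
  obtain ⟨Q, c, hcov, hQ, hQf⟩ := hf.exists_cover_dist_lt hξ.ne' hε
  choose ν hν hν₁ hQν using hQ
  obtain ⟨φ, hφ, hφQ⟩ :=
    exists_firstIndex hξ.le (fun l => mem_deltaZero_of_compl_mem (hν₁ l) (hν l) (hQν l)) hcov
  refine ⟨c ∘ φ, ⟨φ, c, hφ, rfl⟩, fun x => ?_⟩
  rw [dist_comm]
  exact hQf _ x ((hφQ x _).1 rfl).1

theorem SigmaZeroMeasurable.exists_eventually_eq_approx (hξ : 1 < ξ)
    (hf : SigmaZeroMeasurable (ξ + 1) f) {ε : ℝ} (hε : 0 < ε) :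
    ∃ (h : X → Y) (H : ℕ → X → Y), (∀ x, dist (h x) (f x) < ε) ∧
      (∀ x, ∀ᶠ j in atTop, H j x = h x) ∧
      ∀ j, ∃ γ < ξ, 1 ≤ γ ∧ IsSigmaZeroPiecewiseConst (γ + 1) (H j) := by
  have hξ₁ : 1 ≤ ξ + 1 := hξ.le.trans (lt_add_one ξ).le
  obtain ⟨Q, c, hcov, hQ, hQf⟩ := hf.exists_cover_dist_lt (hξ.trans (lt_add_one ξ)).ne' hε
  choose ν hν hν₁ hQν using hQ
  obtain ⟨φ, -, hφQ⟩ :=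
    exists_firstIndex hξ₁ (fun l => mem_deltaZero_of_compl_mem (hν₁ l) (hν l) (hQν l)) hcov
  choose S hSanti hSQ κ hκ hκ₁ hSκ using fun l =>
    exists_antitone_iInter_eq_of_compl_mem_sigmaZero hξ (hν₁ l)
      (Order.lt_add_one_iff.1 (hν l)) (hQν l)
  -- Truncation leaves finitely many levels `κ l j`, bounded by a single `γ < ξ`.
  let T : ℕ → ℕ → Set X := fun j l => if l < j then S l j else univ
  have hT : ∀ j, ∃ γ < ξ, 1 ≤ γ ∧ ∀ l, T j l ∈ DeltaZero X (γ + 1) := by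
    intro j
    obtain ⟨γ, hγ, hκγ⟩ := exists_lt_forall_le_of_forall_lt (fun l => hκ l j) j
    have hγ₁ : 1 ≤ γ := (hκ₁ 0 j).trans (hκγ 0 j.zero_le)
    refine ⟨γ, hγ, hγ₁, fun l => ?_⟩
    by_cases hl : l < j
    · simp only [T, if_pos hl]
      exact deltaZero_mono ((hκ₁ l j).trans (lt_add_one _).le)
        (by gcongr; exact hκγ l hl.le) (hSκ l j)
    · simp only [T, if_neg hl]
      exact univ_mem_deltaZero (hγ₁.trans (lt_add_one γ).le)
  choose γ hγ hγ₁ hTγ using hT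
  choose ψ hψ hψT using fun j =>
    exists_firstIndex ((hγ₁ j).trans (lt_add_one _).le) (hTγ j) fun x => ⟨j, by simp [T]⟩
  refine ⟨c ∘ φ, fun j => c ∘ ψ j, fun x => ?_, fun x => ?_,
    fun j => ⟨γ j, hγ j, hγ₁ j, ψ j, c, hψ j, rfl⟩⟩
  · rw [dist_comm]
    exact hQf _ x ((hφQ x _).1 rfl).1
  obtain ⟨hxQ, hxQ'⟩ := (hφQ x (φ x)).1 rfl
  have hleave : ∀ i < φ x, ∀ᶠ j in atTop, x ∉ S i j := fun i hi => by
    have hxS : x ∉ ⋂ j, S i j := by rw [hSQ]; exact hxQ' i hi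
    obtain ⟨J, hJ⟩ := not_forall.1 (mt mem_iInter.2 hxS)
    exact eventually_atTop.2 ⟨J, fun j hj hxj => hJ (hSanti i hj hxj)⟩
  filter_upwards [eventually_gt_atTop (φ x),
    (eventually_all_finset (Finset.range (φ x))).2 fun i hi => hleave i (Finset.mem_range.1 hi)]
    with j hj hjS
  refine congrArg c ((hψT j x (φ x)).2 ⟨?_, fun i hi => ?_⟩)
  · simp only [T, if_pos hj]
    exact mem_iInter.1 ((hSQ _).symm ▸ hxQ) j
  · simp only [T, if_pos (hi.trans hj)]
    exact hjS i (Finset.mem_range.2 hi)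

end Approximation

section Clamp

noncomputable def clampSeq {Y : Type*} [Dist Y] (T : ℕ → ℝ) (u : ℕ → Y) : ℕ → Y
  | 0 => u 0
  | n + 1 => if dist (u (n + 1)) (clampSeq T u n) ≤ T n then u (n + 1) else clampSeq T u n

variable {Y : Type*} [PseudoMetricSpace Y] {T : ℕ → ℝ} {u : ℕ → Y}

theorem dist_clampSeq_succ_le (hT : ∀ n, 0 ≤ T n) (n : ℕ) :
    dist (clampSeq T u n) (clampSeq T u (n + 1)) ≤ T n := by
  simp only [clampSeq]
  split_ifs with h
  · rwa [dist_comm]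
  · simpa using hT n

theorem clampSeq_eq_of_dist_le {n : ℕ} (hu : ∀ m < n, dist (u (m + 1)) (u m) ≤ T m) :
    clampSeq T u n = u n := by
  induction n with
  | zero => rfl
  | succ n ih =>
    simp only [clampSeq, ih fun m hm => hu m (hm.trans n.lt_succ_self),
      if_pos (hu n n.lt_succ_self)]

/-- Once `u j` agrees with `w` up to `n`, the clamped `u j` stays within a geometric tail of
`w n`, whatever `u j` does later. -/
theorem tendsto_clampSeq_diag {u : ℕ → ℕ → Y} {w : ℕ → Y} {y : Y}
    (huw : ∀ n, ∀ᶠ j in atTop, u j n = w n) (hw : ∀ n, dist (w n) y < (1 / 2) ^ (n + 1)) :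
    Tendsto (fun j => clampSeq (fun n => (1 / 2 : ℝ) ^ n) (u j) j) atTop (𝓝 y) := by
  set T : ℕ → ℝ := fun n => (1 / 2) ^ n
  have hT : ∀ n, 0 ≤ T n := fun n => by positivity
  have hwT : ∀ n, dist (w (n + 1)) (w n) ≤ T n := fun n =>
    calc dist (w (n + 1)) (w n) ≤ dist (w (n + 1)) y + dist (w n) y := dist_triangle_right _ _ _
      _ ≤ (1 / 2) ^ (n + 2) + (1 / 2) ^ (n + 1) := add_le_add (hw _).le (hw _).le
      _ ≤ T n := by simp only [T, pow_succ]; nlinarith [hT n]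
  rw [Metric.tendsto_atTop]
  intro ε hε
  obtain ⟨n₀, hn₀⟩ := exists_pow_lt_of_lt_one (by linarith : 0 < ε / 3)
    (by norm_num : (1 / 2 : ℝ) < 1)
  obtain ⟨J, hJ⟩ := eventually_atTop.1 ((eventually_ge_atTop n₀).and
    ((eventually_all_finset (Finset.range (n₀ + 1))).2 fun m _ => huw m))
  refine ⟨J, fun j hj => ?_⟩
  obtain ⟨hn₀j, hujw⟩ := hJ j hj
  have hstart : clampSeq T (u j) n₀ = w n₀ := by
    rw [clampSeq_eq_of_dist_le fun m hm => ?_, hujw n₀ (by simp)]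
    rw [hujw m (by simp; omega), hujw (m + 1) (by simp; omega)]
    exact hwT m
  have htail : dist (clampSeq T (u j) n₀) (clampSeq T (u j) j) ≤ 2 * (1 / 2) ^ n₀ :=
    calc dist (clampSeq T (u j) n₀) (clampSeq T (u j) j) ≤ ∑ i ∈ Finset.Ico n₀ j, T i :=
          dist_le_Ico_sum_of_dist_le hn₀j fun _ _ => dist_clampSeq_succ_le hT _
      _ ≤ (1 / 2) ^ n₀ / (1 - 1 / 2) := geom_sum_Ico_le_of_lt_one (by norm_num) (by norm_num)
      _ = 2 * (1 / 2) ^ n₀ := by ring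
  calc dist (clampSeq T (u j) j) y
      ≤ dist (clampSeq T (u j) n₀) (clampSeq T (u j) j) + dist (w n₀) y := by
        rw [← hstart]; exact dist_triangle_left _ _ _
    _ < 2 * (1 / 2) ^ n₀ + (1 / 2) ^ (n₀ + 1) := add_lt_add_of_le_of_lt htail (hw n₀)
    _ < ε := by rw [pow_succ]; linarith

theorem IsSigmaZeroPiecewiseConst.clampSeq {X : Type*} [TopologicalSpace X] [MetrizableSpace X]
    {ξ : Ordinal.{0}} (hξ : 1 ≤ ξ) {u : ℕ → X → Y} {n : ℕ}
    (hu : ∀ m ≤ n, IsSigmaZeroPiecewiseConst ξ (u m)) :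
    IsSigmaZeroPiecewiseConst ξ fun x => clampSeq T (fun m => u m x) n := by
  induction n with
  | zero => exact hu 0 le_rfl
  | succ n ih =>
    exact (hu (n + 1) le_rfl).comp₂ (ih fun m hm => hu m (hm.trans n.le_succ)) hξ
      fun a b => if dist a b ≤ T n then a else b

end Clamp

section BaireClass

variable {X Y : Type*} [TopologicalSpace X] [MetrizableSpace X] {ξ : Ordinal.{0}} {f : X → Y}

/-- Banach's diagonal argument, made to work in an arbitrary metric target by clamping. -/
theorem exists_piecewiseConst_seq_tendsto_of_eventually_eq [PseudoMetricSpace Y] {h : ℕ → X → Y}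
    {H : ℕ → ℕ → X → Y} (hh : ∀ n x, dist (h n x) (f x) < (1 / 2) ^ (n + 1))
    (hH : ∀ n x, ∀ᶠ j in atTop, H n j x = h n x)
    (hHξ : ∀ n j, ∃ γ < ξ, 1 ≤ γ ∧ IsSigmaZeroPiecewiseConst (γ + 1) (H n j)) :
    ∃ G : ℕ → X → Y, (∀ j, ∃ γ < ξ, 1 ≤ γ ∧ IsSigmaZeroPiecewiseConst (γ + 1) (G j)) ∧
      ∀ x, Tendsto (fun j => G j x) atTop (𝓝 (f x)) := by
  choose γ hγ hγ₁ hHγ using hHξ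
  refine ⟨fun j x => clampSeq (fun n => (1 / 2 : ℝ) ^ n) (fun n => H n j x) j, fun j => ?_,
    fun x => tendsto_clampSeq_diag (fun n => hH n x) (fun n => hh n x)⟩
  obtain ⟨β, hβ, hγβ⟩ := exists_lt_forall_le_of_forall_lt (fun n => hγ n j) j
  have hβ₁ : 1 ≤ β := (hγ₁ 0 j).trans (hγβ 0 j.zero_le)
  refine ⟨β, hβ, hβ₁, IsSigmaZeroPiecewiseConst.clampSeq (hβ₁.trans (lt_add_one β).le)
    fun m hm => (hHγ m j).mono ((hγ₁ m j).trans (lt_add_one _).le) ?_⟩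
  gcongr
  exact hγβ m hm

variable [TopologicalSpace Y] [MetrizableSpace Y] [SeparableSpace Y]

theorem SigmaZeroMeasurable.exists_lower_seq_tendsto (hξ : 1 < ξ)
    (hf : SigmaZeroMeasurable (ξ + 1) f) :
    ∃ g : ℕ → X → Y, (∀ n, ∃ γ < ξ, 1 ≤ γ ∧ SigmaZeroMeasurable (γ + 1) (g n)) ∧
      ∀ x, Tendsto (fun n => g n x) atTop (𝓝 (f x)) := by
  rcases isEmpty_or_nonempty X with hX | hX
  · exact ⟨fun _ => f,
      fun _ => ⟨1, hξ, le_rfl, sigmaZeroMeasurable_of_isEmpty (lt_add_one 1).le f⟩,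
      fun x => isEmptyElim x⟩
  have : Nonempty Y := hX.map f
  let := metrizableSpaceMetric Y
  choose h H hh hH hHξ using fun n =>
    hf.exists_eventually_eq_approx hξ (pow_pos (by norm_num : (0 : ℝ) < 1 / 2) (n + 1))
  obtain ⟨G, hG, hlim⟩ := exists_piecewiseConst_seq_tendsto_of_eventually_eq hh hH hHξ
  refine ⟨G, fun j => ?_, hlim⟩
  obtain ⟨γ, hγ, hγ₁, hGγ⟩ := hG j
  exact ⟨γ, hγ, hγ₁, hGγ.sigmaZeroMeasurable (hγ₁.trans (lt_add_one γ).le)⟩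

/-- Lebesgue–Hausdorff–Banach. -/
theorem SigmaZeroMeasurable.baireClass (hξ : 1 ≤ ξ) (hf : SigmaZeroMeasurable (ξ + 1) f) :
    BaireClass ξ f := by
  induction ξ using WellFoundedLT.induction generalizing f with
  | ind ξ IH =>
  rcases hξ.eq_or_lt with rfl | hξ
  · rw [one_add_one_eq_two] at hf
    exact baireClass_one.2 hf
  obtain ⟨g, hg, hlim⟩ := hf.exists_lower_seq_tendsto hξ
  refine (baireClass_iff hξ.ne').2 ⟨g, fun n => ?_, hlim⟩
  obtain ⟨γ, hγ, hγ₁, hgγ⟩ := hg n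
  exact ⟨γ, hγ, hγ₁, IH γ hγ hγ₁ hgγ⟩

theorem exists_isDeltaFun_seq_tendsto (hξ : 1 < ξ) {g : ℕ → X → Y}
    (hg : ∀ n, SigmaZeroMeasurable ξ (g n))
    (hlim : ∀ x, Tendsto (fun n => g n x) atTop (𝓝 (f x))) :
    ∃ h : ℕ → X → Y, (∀ n, IsDeltaFun ξ (h n)) ∧
      ∀ x, Tendsto (fun n => h n x) atTop (𝓝 (f x)) := by
  rcases isEmpty_or_nonempty X with hX | hX
  · refine ⟨g, fun n A _ => ?_, hlim⟩
    rw [eq_empty_of_isEmpty (g n ⁻¹' A)]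
    exact empty_mem_sigmaZero hξ.le
  have : Nonempty Y := hX.map (g 0)
  let := metrizableSpaceMetric Y
  choose h hh hhg using fun n =>
    (hg n).exists_piecewiseConst_dist_lt hξ (pow_pos (by norm_num : (0 : ℝ) < 1 / 2) n)
  refine ⟨h, fun n => (hh n).isDeltaFun hξ.le, fun x => (hlim x).congr_dist ?_⟩
  refine squeeze_zero (fun _ => dist_nonneg) (fun n => (dist_comm _ _).trans_le (hhg n x).le) ?_
  exact tendsto_pow_atTop_nhds_zero_of_lt_one (by norm_num) (by norm_num)

end BaireClass

theorem pointwise_limit_deltaFun_and_baireClass_general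
    {X Y : Type*} [TopologicalSpace X] [TopologicalSpace Y]
    [TopologicalSpace.MetrizableSpace X] [TopologicalSpace.MetrizableSpace Y]
    [TopologicalSpace.SeparableSpace Y]
    (ξ : Ordinal.{0}) (f : X → Y) :
    (1 ≤ ξ →
      (∃ g : ℕ → X → Y, (∀ n, IsDeltaFun ξ (g n)) ∧
        ∀ x, Tendsto (fun n => g n x) atTop (𝓝 (f x))) →
      BaireClass ξ f) ∧
    (1 < ξ → BaireClass ξ f →
      ∃ g : ℕ → X → Y, (∀ n, IsDeltaFun ξ (g n)) ∧
        ∀ x, Tendsto (fun n => g n x) atTop (𝓝 (f x))) := by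
  refine ⟨fun hξ ⟨g, hg, hlim⟩ => ?_, fun hξ hf => ?_⟩
  · exact (sigmaZeroMeasurable_of_tendsto hξ (fun n => (hg n).sigmaZeroMeasurable hξ)
      hlim).baireClass hξ
  obtain ⟨g, hg, hlim⟩ := (baireClass_iff hξ.ne').1 hf
  refine exists_isDeltaFun_seq_tendsto hξ (fun n => ?_) hlim
  obtain ⟨ν, hν, hν₁, hgν⟩ := hg n
  exact (hgν.sigmaZeroMeasurable hν₁).mono (hν₁.trans (lt_add_one ν).le) (Order.add_one_le_iff.2 hν)

/-- Let `X`, `Y` be metrizable spaces with `Y` separable.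
(a) For `1 ≤ ξ < ω₁`, a pointwise limit of a sequence of `Δ⁰_ξ`-functions is
of Baire class `ξ`.
(b) For `1 < ξ < ω₁`, every Baire class `ξ` function is the pointwise limit of
a sequence of `Δ⁰_ξ`-functions. -/
theorem pointwise_limit_deltaFun_and_baireClass
    {X Y : Type*} [TopologicalSpace X] [TopologicalSpace Y]
    [TopologicalSpace.MetrizableSpace X] [TopologicalSpace.MetrizableSpace Y]
    [TopologicalSpace.SeparableSpace Y]
    (ξ : Ordinal.{0}) (hξ : ξ < ω₁) (f : X → Y) :
    (1 ≤ ξ →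
      (∃ g : ℕ → X → Y, (∀ n, IsDeltaFun ξ (g n)) ∧
        ∀ x, Tendsto (fun n => g n x) atTop (𝓝 (f x))) →
      BaireClass ξ f) ∧
    (1 < ξ → BaireClass ξ f →
      ∃ g : ℕ → X → Y, (∀ n, IsDeltaFun ξ (g n)) ∧
        ∀ x, Tendsto (fun n => g n x) atTop (𝓝 (f x))) :=
  pointwise_limit_deltaFun_and_baireClass_general ξ f
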